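/- Let n ≥ 2 and let z, w ∈ ℂⁿ satisfy Σ_{m=1}^{n} z_m·w_m = 1. Then there exists an invertible matrix M ∈ GL(n, ℂ) such that, setting z' = M·z and w' = (Mᵀ)⁻¹·w (so that Σ_m z'_m·w'_m = 1 still holds), one has z'_j·w'_j + z'_k·w'_k ≠ 0 for all j, k ∈ {1,…,n}; in particular every z'_j and every w'_j is nonzero. (This is the pointwise linear-algebra content of the paper's Proposition that the condition (★) can be arranged by a linear change of coordinates, using the transformation law z ↦ Mz, w ↦ (Mᵀ)⁻¹w for the projective dual coordinates.) -/

import Mathlib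

/-!
The substitution `z ↦ M z`, `w ↦ M⁻ᵀ w` acts transitively on pairs `(z, w)` with `w ⬝ᵥ z = 1`:
for any target pair `(u, v)` with `v ⬝ᵥ u = 1` and `w ⬝ᵥ u ≠ 0`, the matrix
`(1 - u vᵀ)(1 - z wᵀ) + u wᵀ` (project along `z` onto `ker w`, then along `u` onto `ker v`,
and send `z` to `u`) is invertible, sends `z` to `u`, and its transpose sends `v` to `w`.
So it suffices to take `u` with nonzero entries and `w ⬝ᵥ u ≠ 0`, and `v j = 1 / (n u j)`;
then every product `z'_j w'_j` equals `1 / n`.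
-/

open Matrix

namespace Matrix

section CommRing

variable {R ι : Type*} [CommRing R] [Fintype ι] [DecidableEq ι]

def transferMatrix (z w u v : ι → R) : Matrix ι ι R :=
  (1 - vecMulVec u v) * (1 - vecMulVec z w) + vecMulVec u w

lemma transferMatrix_mulVec_self {z w : ι → R} (hwz : w ⬝ᵥ z = 1) (u v : ι → R) :
    transferMatrix z w u v *ᵥ z = u := by
  simp [transferMatrix, add_mulVec, ← mulVec_mulVec, sub_mulVec, vecMulVec_mulVec, hwz]

lemma transferMatrix_mulVec_of_dotProduct_eq_zero {w x : ι → R} (hwx : w ⬝ᵥ x = 0)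
    (z u v : ι → R) : transferMatrix z w u v *ᵥ x = x - (v ⬝ᵥ x) • u := by
  simp [transferMatrix, add_mulVec, ← mulVec_mulVec, sub_mulVec, vecMulVec_mulVec, hwx,
    op_smul_eq_smul]

lemma vecMul_transferMatrix (z w : ι → R) {u v : ι → R} (hvu : v ⬝ᵥ u = 1) :
    v ᵥ* transferMatrix z w u v = w := by
  simp [transferMatrix, vecMul_add, ← vecMul_vecMul, vecMul_sub, vecMul_vecMulVec, hvu]

end CommRing

section Field

variable {K ι : Type*} [Field K] [Fintype ι]

lemma isUnit_transferMatrix [DecidableEq ι] (z : ι → K) {w u v : ι → K} (hvu : v ⬝ᵥ u = 1)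
    (hwu : w ⬝ᵥ u ≠ 0) : IsUnit (transferMatrix z w u v) := by
  rw [← mulVec_injective_iff_isUnit, ← coe_mulVecLin, injective_iff_map_eq_zero]
  intro x (hx : transferMatrix z w u v *ᵥ x = 0)
  have hwx : w ⬝ᵥ x = 0 := by
    rw [← vecMul_transferMatrix z w hvu, ← dotProduct_mulVec, hx, dotProduct_zero]
  have hx_eq : x = (v ⬝ᵥ x) • u := by
    rw [← sub_eq_zero, ← transferMatrix_mulVec_of_dotProduct_eq_zero hwx z u v]
    exact hx
  have hvx : v ⬝ᵥ x = 0 := by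
    have := congrArg (w ⬝ᵥ ·) hx_eq
    simp only [dotProduct_smul, smul_eq_mul, hwx] at this
    exact (mul_eq_zero.mp this.symm).resolve_right hwu
  rw [hx_eq, hvx, zero_smul]

lemma exists_forall_ne_zero_dotProduct_ne_zero [DecidableEq ι] [NeZero (2 : K)] {w : ι → K}
    (hw : w ≠ 0) : ∃ u : ι → K, (∀ j, u j ≠ 0) ∧ w ⬝ᵥ u ≠ 0 := by
  obtain ⟨i, hi⟩ := Function.ne_iff.mp hw
  by_cases h : w ⬝ᵥ 1 = 0
  · refine ⟨1 + Pi.single i 1, fun j => ?_, ?_⟩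
    · rcases eq_or_ne j i with rfl | hj
      · simpa [one_add_one_eq_two] using (two_ne_zero : (2 : K) ≠ 0)
      · simp [hj]
    · simpa [dotProduct_add, h] using hi
  · exact ⟨1, fun _ => one_ne_zero, h⟩

lemma exists_dotProduct_eq_one_and_mul_eq_inv_card [CharZero K] [Nonempty ι] {u : ι → K}
    (hu : ∀ j, u j ≠ 0) :
    ∃ v : ι → K, v ⬝ᵥ u = 1 ∧ ∀ j, u j * v j = (Fintype.card ι : K)⁻¹ := by
  have hcard : (Fintype.card ι : K) ≠ 0 := Nat.cast_ne_zero.mpr Fintype.card_ne_zero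
  have huv : ∀ j, u j * (Fintype.card ι * u j)⁻¹ = (Fintype.card ι : K)⁻¹ := fun j => by
    field_simp [hu j]
  refine ⟨fun j => (Fintype.card ι * u j)⁻¹, ?_, huv⟩
  rw [dotProduct_comm]
  simp only [dotProduct, huv, Finset.sum_const, Finset.card_univ, nsmul_eq_mul]
  exact mul_inv_cancel₀ hcard

end Field

end Matrix

theorem star_condition_by_linear_change
    {n : ℕ} (z w : Fin n → ℂ)
    (hzw : ∑ m, z m * w m = 1) :
    ∃ M : Matrix (Fin n) (Fin n) ℂ, IsUnit M ∧
      (∑ m, (M.mulVec z) m * ((M.transpose)⁻¹.mulVec w) m = 1) ∧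
      ∀ j k : Fin n,
        (M.mulVec z) j * ((M.transpose)⁻¹.mulVec w) j
          + (M.mulVec z) k * ((M.transpose)⁻¹.mulVec w) k ≠ 0 := by
  have hwz : w ⬝ᵥ z = 1 := by rw [dotProduct_comm]; exact hzw
  have : Nonempty (Fin n) := Fin.pos_iff_nonempty.mp <| Nat.pos_of_ne_zero <| by
    rintro rfl
    simp at hzw
  have hw : w ≠ 0 := by
    rintro rfl
    simp at hwz
  obtain ⟨u, hu, hwu⟩ := exists_forall_ne_zero_dotProduct_ne_zero hw
  obtain ⟨v, hvu, huv⟩ := exists_dotProduct_eq_one_and_mul_eq_inv_card (K := ℂ) hu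
  set M := transferMatrix z w u v
  have hM : IsUnit M := isUnit_transferMatrix z hvu hwu
  have hMw : Mᵀ⁻¹ *ᵥ w = v := by
    have := ((isUnit_transpose M).mpr hM).invertible
    exact inv_mulVec_eq_vec (by rw [mulVec_transpose, vecMul_transferMatrix z w hvu])
  refine ⟨M, hM, ?_, fun j k => ?_⟩ <;> simp only [transferMatrix_mulVec_self hwz, hMw, M]
  · exact (dotProduct_comm u v).trans hvu
  · rw [huv, huv, ← two_mul]
    exact mul_ne_zero two_ne_zero (inv_ne_zero (Nat.cast_ne_zero.mpr Fintype.card_ne_zero))
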